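/- arXiv:2303.14021 — 2 statements merged into one kernel-verified Lean document; each statement's English description precedes it below -/
import Mathlib

section
/- Assume the standing assumptions on f and g, that f+g satisfies the global sharpness condition with constant μ > 0, and that ε and α satisfy the parameter assumption, with E⁻ and E⁺ defined accordingly. Let (x_t) be an inexact forward–backward sequence with constant step size α and accuracy ε. If there exists t₀ ∈ ℕ such that E⁻ < dist(x_t,S) < E⁺ for all t ≥ t₀, then Σ_{t≥t₀} ‖x_t − x_{t+1}‖ < +∞, so (x_t) is a Cauchy sequence and converges strongly in X. -/
/-!
Write `d_t = dist(x_t, S)`. Testing the inexact prox step against the convex combination of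
`x_{t+1}` with a point of `S` near `x_t` (weak convexity of `f`), then using the gradient
inequality and the descent lemma for `g` and sharpness of `f + g`, gives
`d_{t+1}² / (2α) + (1/(2α) - L_g/2) ‖x_t - x_{t+1}‖² ≤ d_t² / (2α) + q(d_{t+1})`, where
`q(d) = (ρ+1)/2 · d² - μ d + ε(α+1)/α = (ρ+1)/2 · (d - E⁻)(d - E⁺)`.
While `d_t` stays in the band `(E⁻, E⁺)`, `q(d_{t+1}) < 0`, so `d_t` decreases and stays a fixed
distance below `E⁺`; this makes `d_t² - (E⁻)²` decay geometrically, hence also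
`‖x_t - x_{t+1}‖`, and the series of steps converges.
-/

open Metric Filter Set AffineMap
open scoped RealInnerProductSpace

section SmoothConvex

variable {X : Type*} [NormedAddCommGroup X] [InnerProductSpace ℝ X] [CompleteSpace X]
  {g : X → ℝ} {g' : X → X}

lemma hasDerivAt_comp_lineMap (hg : ∀ x, HasGradientAt g (g' x) x) (a b : X) (t : ℝ) :
    HasDerivAt (fun t => g (lineMap a b t)) ⟪g' (lineMap a b t), b - a⟫ t := by
  simpa [Function.comp_def] using (hg _).hasFDerivAt.comp_hasDerivAt t hasDerivAt_lineMap

lemma ConvexOn.add_inner_gradient_le (hconv : ConvexOn ℝ univ g)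
    (hg : ∀ x, HasGradientAt g (g' x) x) (a b : X) : g a + ⟪g' a, b - a⟫ ≤ g b := by
  have := (hconv.comp_affineMap (lineMap a b)).le_slope_of_hasDerivAt (mem_univ 0) (mem_univ 1)
    zero_lt_one (hasDerivAt_comp_lineMap hg a b 0)
  simp only [lineMap_apply_zero, slope_def_field, Function.comp_apply, lineMap_apply_one] at this
  linarith

lemma le_add_inner_gradient_add_sq {L : ℝ} (hg : ∀ x, HasGradientAt g (g' x) x)
    (hlip : ∀ x y, ‖g' x - g' y‖ ≤ L * ‖x - y‖) (a b : X) :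
    g b ≤ g a + ⟪g' a, b - a⟫ + L / 2 * ‖b - a‖ ^ 2 := by
  set v := b - a
  let ψ t := g (lineMap a b t) - t * ⟪g' a, v⟫ - L / 2 * ‖v‖ ^ 2 * t ^ 2
  have hψ t : HasDerivAt ψ (⟪g' (lineMap a b t), v⟫ - ⟪g' a, v⟫ - L * ‖v‖ ^ 2 * t) t := by
    have := ((hasDerivAt_comp_lineMap hg a b t).fun_sub
      ((hasDerivAt_id t).mul_const ⟪g' a, v⟫)).fun_sub
        ((hasDerivAt_pow 2 t).const_mul (L / 2 * ‖v‖ ^ 2))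
    exact this.congr_deriv (by push_cast; ring)
  have hanti : AntitoneOn ψ (Icc 0 1) := by
    refine antitoneOn_of_deriv_nonpos (convex_Icc 0 1)
      (fun t _ => (hψ t).continuousAt.continuousWithinAt)
      (fun t _ => (hψ t).differentiableAt.differentiableWithinAt) fun t ht => ?_
    rw [interior_Icc] at ht
    have hdist : ‖lineMap a b t - a‖ = t * ‖v‖ := by
      rw [lineMap_apply_module', add_sub_cancel_right, norm_smul, Real.norm_of_nonneg ht.1.le]
    have : ⟪g' (lineMap a b t) - g' a, v⟫ ≤ L * (t * ‖v‖) * ‖v‖ :=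
      (real_inner_le_norm _ _).trans
        (mul_le_mul_of_nonneg_right (hdist ▸ hlip _ _) (norm_nonneg v))
    rw [(hψ t).deriv, inner_sub_left] at *
    linarith
  have := hanti (left_mem_Icc.2 zero_le_one) (right_mem_Icc.2 zero_le_one) zero_le_one
  simp only [ψ, lineMap_apply_zero, lineMap_apply_one] at this
  linarith

end SmoothConvex

section InexactProx

variable {X : Type*} [NormedAddCommGroup X] [InnerProductSpace ℝ X]

/-- `f + (ρ/2)‖·‖²` is convex, written as an inequality between `EReal` values. -/
def IsWeaklyConvex (ρ : ℝ) (f : X → EReal) : Prop :=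
  ∀ x y : X, ∀ l : ℝ, 0 ≤ l → l ≤ 1 →
    f (l • x + (1 - l) • y) ≤ ((l : ℝ) : EReal) * f x + ((1 - l : ℝ) : EReal) * f y +
      ((l * (1 - l) * (ρ / 2) * ‖x - y‖ ^ 2 : ℝ) : EReal)

def IsInexactProx (f : X → EReal) (α ε : ℝ) (y p : X) : Prop :=
  ∀ z : X, f p + ((1 / (2 * α) * ‖p - y‖ ^ 2 : ℝ) : EReal) ≤
    f z + ((1 / (2 * α) * ‖z - y‖ ^ 2 + ε : ℝ) : EReal)

lemma EReal.ne_top_of_add_coe_le {a b : EReal} {u v : ℝ} (h : a + u ≤ b + v) (hb : b ≠ ⊤) :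
    a ≠ ⊤ := by
  rintro rfl
  rw [EReal.top_add_coe, top_le_iff] at h
  exact EReal.add_ne_top hb (EReal.coe_ne_top v) h

/-- The prox inequality of a `ρ`-weakly convex function, tested against the convex combination
`l • s + (1 - l) • p` with `l = α / (1 - αρ)`, the weight that makes the quadratic terms merge
into `(ρ + 1) / 2 * ‖p - s‖ ^ 2`. -/
lemma IsInexactProx.add_inner_le {f : X → EReal} {ρ α ε a b : ℝ} {y p s : X}
    (hwc : IsWeaklyConvex ρ f) (hα : 0 < α) (hαρ : α * (ρ + 1) < 1)
    (hp : IsInexactProx f α ε y p) (hfp : f p = a) (hfs : f s = b) :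
    a + ⟪p - y, p - s⟫ / α ≤ b + (ρ + 1) / 2 * ‖p - s‖ ^ 2 + ε * (1 - α * ρ) / α := by
  have hαρ' : 0 < 1 - α * ρ := by linarith
  set l := α / (1 - α * ρ)
  have hl : l * (1 - α * ρ) = α := div_mul_cancel₀ α hαρ'.ne'
  have hl0 : 0 < l := div_pos hα hαρ'
  have hl1 : l ≤ 1 := by rw [div_le_one hαρ']; linarith
  have hcomb : a + 1 / (2 * α) * ‖p - y‖ ^ 2 ≤
      l * b + (1 - l) * a + l * (1 - l) * (ρ / 2) * ‖s - p‖ ^ 2 +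
        (1 / (2 * α) * ‖l • s + (1 - l) • p - y‖ ^ 2 + ε) := by
    have := (hp _).trans (add_le_add_left (hwc s p l hl0.le hl1) _)
    rw [hfp, hfs] at this
    exact_mod_cast this
  have hexp : ‖l • s + (1 - l) • p - y‖ ^ 2 =
      ‖p - y‖ ^ 2 - 2 * l * ⟪p - y, p - s⟫ + l ^ 2 * ‖p - s‖ ^ 2 := by
    rw [show l • s + (1 - l) • p - y = (p - y) - l • (p - s) by module, norm_sub_sq_real,
      real_inner_smul_right, norm_smul, mul_pow, Real.norm_eq_abs, sq_abs]
    ring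
  rw [hexp, norm_sub_rev s p] at hcomb
  clear_value l
  field_simp at hcomb ⊢
  refine le_of_mul_le_mul_left ?_ hl0
  linear_combination hcomb + (l * ‖p - s‖ ^ 2 - 2 * ε) * hl

end InexactProx

lemma Metric.le_mul_infDist_sq_add {E : Type*} [PseudoMetricSpace E] {S : Set E} {x : E}
    {A B C : ℝ} (hB : 0 < B) (hS : S.Nonempty) (h : ∀ s ∈ S, A ≤ B * dist x s ^ 2 + C) :
    A ≤ B * infDist x S ^ 2 + C := by
  have : √((A - C) / B) ≤ infDist x S := (le_infDist hS).2 fun s hs =>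
    Real.sqrt_le_iff.2 ⟨dist_nonneg, by rw [div_le_iff₀' hB]; linarith [h s hs]⟩
  have := (Real.sqrt_le_iff.1 this).2
  rw [div_le_iff₀' hB] at this
  linarith

section OneStep

variable {X : Type*} [NormedAddCommGroup X] [InnerProductSpace ℝ X] [CompleteSpace X]
  {f : X → EReal} {g : X → ℝ} {g' : X → X} {ρ L α ε : ℝ}

omit [CompleteSpace X] in
lemma inner_sub_sub_smul_div_eq (p x s v : X) (α : ℝ) (hα : α ≠ 0) :
    ⟪p - (x - α • v), p - s⟫ / α =
      1 / (2 * α) * ‖x - p‖ ^ 2 + 1 / (2 * α) * ‖p - s‖ ^ 2 - 1 / (2 * α) * ‖x - s‖ ^ 2 +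
        ⟪v, p - x⟫ - ⟪v, s - x⟫ := by
  have hv : ⟪v, p - s⟫ = ⟪v, p - x⟫ - ⟪v, s - x⟫ := by
    rw [← inner_sub_right, sub_sub_sub_cancel_right]
  rw [show x - s = (x - p) + (p - s) by abel, norm_add_sq_real,
    show p - (x - α • v) = -(x - p) + α • v by module, inner_add_left, inner_neg_left,
    real_inner_smul_left, hv]
  field_simp
  ring

lemma IsInexactProx.forwardBackward_le {x p s : X} {a b r : ℝ} (hwc : IsWeaklyConvex ρ f)
    (hconv : ConvexOn ℝ Set.univ g) (hg : ∀ x, HasGradientAt g (g' x) x)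
    (hlip : ∀ x y, ‖g' x - g' y‖ ≤ L * ‖x - y‖) (hα : 0 < α) (hαρ : α * (ρ + 1) < 1)
    (hp : IsInexactProx f α ε (x - α • g' x) p) (hfp : f p = a) (hfs : f s = b)
    (hr : b + g s + r ≤ a + g p) :
    r + (1 / (2 * α) - (ρ + 1) / 2) * ‖p - s‖ ^ 2 + (1 / (2 * α) - L / 2) * ‖x - p‖ ^ 2 ≤
      1 / (2 * α) * ‖x - s‖ ^ 2 + ε * (1 - α * ρ) / α := by
  have hprox := hp.add_inner_le hwc hα hαρ hfp hfs
  rw [inner_sub_sub_smul_div_eq p x s (g' x) α hα.ne'] at hprox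
  have hsub := hconv.add_inner_gradient_le hg x s
  have hdesc := le_add_inner_gradient_add_sq hg hlip x p
  rw [norm_sub_rev p x] at hdesc
  linarith

lemma one_div_two_mul_sub_half_pos {α q : ℝ} (hα : 0 < α) (h : α * q < 1) :
    0 < 1 / (2 * α) - q / 2 := by
  rw [show 1 / (2 * α) - q / 2 = (1 - α * q) / (2 * α) by field_simp]
  exact div_pos (by linarith) (by positivity)

theorem IsInexactProx.infDist_step_le {S : Set X} {μ : ℝ} {x p : X} (hbot : ∀ x, f x ≠ ⊥)
    (hwc : IsWeaklyConvex ρ f) (hconv : ConvexOn ℝ Set.univ g)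
    (hg : ∀ x, HasGradientAt g (g' x) x) (hlip : ∀ x y, ‖g' x - g' y‖ ≤ L * ‖x - y‖)
    (hα : 0 < α) (hαρ : α * (ρ + 1) < 1)
    (hSmin : ∀ s ∈ S, ∀ y, f s + ((g s : ℝ) : EReal) ≤ f y + ((g y : ℝ) : EReal))
    (hfin : ∃ x, f x ≠ ⊤) (hSne : S.Nonempty)
    (hsharp : ∀ x, sInf (Set.range fun y => f y + ((g y : ℝ) : EReal)) +
      ((μ * infDist x S : ℝ) : EReal) ≤ f x + ((g x : ℝ) : EReal))
    (hp : IsInexactProx f α ε (x - α • g' x) p) :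
    μ * infDist p S + (1 / (2 * α) - (ρ + 1) / 2) * infDist p S ^ 2 +
        (1 / (2 * α) - L / 2) * ‖x - p‖ ^ 2 ≤
      1 / (2 * α) * infDist x S ^ 2 + ε * (1 - α * ρ) / α := by
  obtain ⟨x₀, hx₀⟩ := hfin
  have hSfin s (hs : s ∈ S) : f s ≠ ⊤ := EReal.ne_top_of_add_coe_le (hSmin s hs x₀) hx₀
  obtain ⟨s₀, hs₀⟩ := hSne
  have hpfin : f p ≠ ⊤ := EReal.ne_top_of_add_coe_le (hp s₀) (hSfin s₀ hs₀)
  refine le_mul_infDist_sq_add (by positivity) ⟨s₀, hs₀⟩ fun s hs => ?_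
  have hfs := EReal.coe_toReal (hSfin s hs) (hbot s)
  have hfp := EReal.coe_toReal hpfin (hbot p)
  have hr : (f s).toReal + g s + μ * infDist p S ≤ (f p).toReal + g p := by
    have hinf : f s + ((g s : ℝ) : EReal) ≤ sInf (Set.range fun y => f y + ((g y : ℝ) : EReal)) :=
      le_sInf (Set.forall_mem_range.2 (hSmin s hs))
    have := (add_le_add_left hinf _).trans (hsharp p)
    rw [← hfs, ← hfp] at this
    exact_mod_cast this
  have hstep := hp.forwardBackward_le hwc hconv hg hlip hα hαρ hfp.symm hfs.symm hr
  have hdist : infDist p S ^ 2 ≤ ‖p - s‖ ^ 2 := by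
    rw [← dist_eq_norm]
    exact pow_le_pow_left₀ infDist_nonneg (infDist_le_dist_of_mem hs) 2
  rw [dist_eq_norm]
  linarith [mul_le_mul_of_nonneg_left hdist (one_div_two_mul_sub_half_pos hα hαρ).le]

end OneStep

lemma summable_of_sq_le_of_contraction {V Δ : ℕ → ℝ} {r : ℝ} (hr0 : 0 ≤ r) (hr1 : r < 1)
    (hcontr : ∀ t, V (t + 1) ≤ r * V t) (hΔ : ∀ t, Δ t ^ 2 ≤ V t) : Summable Δ := by
  have hsqrt : Summable fun t => √(V t) := by
    refine summable_of_ratio_norm_eventually_le (r := √r)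
      ((Real.sqrt_lt_sqrt hr0 hr1).trans_eq Real.sqrt_one) (Eventually.of_forall fun t => ?_)
    rw [Real.norm_of_nonneg (Real.sqrt_nonneg _), Real.norm_of_nonneg (Real.sqrt_nonneg _),
      ← Real.sqrt_mul hr0]
    exact Real.sqrt_le_sqrt (hcontr t)
  exact hsqrt.of_norm_bounded fun t => Real.abs_le_sqrt (hΔ t)

lemma summable_of_sq_step_le_of_mem_band {d Δ : ℕ → ℝ} {a c k m M : ℝ} (ha : 0 < a) (hc : 0 < c)
    (hk : 0 < k) (hm : 0 ≤ m) (hband : ∀ t, m < d t ∧ d t < M)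
    (hstep : ∀ t, a * d (t + 1) ^ 2 + c * Δ t ^ 2 ≤
      a * d t ^ 2 + k * (d (t + 1) - m) * (d (t + 1) - M)) :
    Summable Δ := by
  have hd t : 0 ≤ d t := hm.trans (hband t).1.le
  have hΔ t : 0 ≤ c * Δ t ^ 2 := by positivity
  have hneg t : k * (d (t + 1) - m) * (d (t + 1) - M) ≤ 0 :=
    mul_nonpos_of_nonneg_of_nonpos (mul_nonneg hk.le (sub_nonneg.2 (hband _).1.le))
      (sub_nonpos.2 (hband _).2.le)
  have hanti : Antitone d := antitone_nat_of_succ_le fun t => by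
    have : d (t + 1) ^ 2 ≤ d t ^ 2 :=
      le_of_mul_le_mul_left (by linarith [hstep t, hneg t, hΔ t]) ha
    exact (pow_le_pow_iff_left₀ (hd _) (hd t) two_ne_zero).1 this
  set γ := M - d 0
  have hγ : 0 < γ := sub_pos.2 (hband 0).2
  set K := a * (M + m)
  set κ := k * γ
  have hK : 0 < K := mul_pos ha (by linarith [hband 0])
  have hκ : 0 < κ := mul_pos hk hγ
  set V : ℕ → ℝ := fun t => a * (d t ^ 2 - m ^ 2)
  have hV0 t : 0 ≤ V t := mul_nonneg ha.le (sub_nonneg.2 (pow_le_pow_left₀ hm (hband t).1.le 2))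
  have hdecay t : V (t + 1) + κ * (d (t + 1) - m) ≤ V t := by
    have hgap : d (t + 1) - M ≤ -γ := by linarith [hanti (Nat.zero_le (t + 1))]
    have := mul_le_mul_of_nonneg_left hgap (mul_nonneg hk.le (sub_nonneg.2 (hband (t + 1)).1.le))
    linarith [hstep t, hΔ t]
  have hVle t : V (t + 1) ≤ K * (d (t + 1) - m) := by
    have := mul_le_mul_of_nonneg_left (mul_le_mul_of_nonneg_right
      (add_le_add_right (hband (t + 1)).2.le m) (sub_nonneg.2 (hband (t + 1)).1.le)) ha.le
    linarith
  have hcontr t : V (t + 1) ≤ K / (K + κ) * V t := by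
    rw [div_mul_eq_mul_div, le_div_iff₀ (by positivity)]
    linarith [mul_le_mul_of_nonneg_left (hVle t) hκ.le, mul_le_mul_of_nonneg_left (hdecay t) hK.le]
  refine summable_of_sq_le_of_contraction (r := K / (K + κ)) (by positivity)
    ((div_lt_one (by positivity)).2 (by linarith))
    (fun t => by rw [← mul_div_assoc]; exact div_le_div_of_nonneg_right (hcontr t) hc.le)
    fun t => ?_
  rw [le_div_iff₀ hc]
  linarith [hstep t, hneg t, hV0 (t + 1)]

lemma pos_and_mul_lt_one_of_lt_one_div {α q : ℝ} (hα : 0 < α) (h : α < 1 / q) :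
    0 < q ∧ α * q < 1 := by
  have hq : 0 < q := by
    by_contra! hq
    linarith [one_div_nonpos.2 hq]
  exact ⟨hq, (lt_div_iff₀ hq).1 h⟩

lemma quadratic_eq_mul_sub_mul_sub {p μ e r : ℝ} (hp : p ≠ 0) (hdisc : 2 * p * e ≤ μ ^ 2) :
    p / 2 * r ^ 2 - μ * r + e =
      p / 2 * (r - (μ - √(μ ^ 2 - 2 * p * e)) / p) * (r - (μ + √(μ ^ 2 - 2 * p * e)) / p) := by
  have hs := Real.sq_sqrt (sub_nonneg.2 hdisc)
  generalize √(μ ^ 2 - 2 * p * e) = s at hs ⊢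
  field_simp
  linear_combination hs

lemma sub_sqrt_div_nonneg {p μ e : ℝ} (hp : 0 < p) (hμ : 0 ≤ μ) (hpe : 0 ≤ p * e) :
    0 ≤ (μ - √(μ ^ 2 - 2 * p * e)) / p :=
  div_nonneg (sub_nonneg.2 (Real.sqrt_le_iff.2 ⟨hμ, by linarith⟩)) hp.le

lemma two_mul_mul_le_sq_of_params {μ ρ Lg α ε : ℝ} (hρ : 0 < ρ + 1) (hα : 0 < α)
    (hεlt : ε < μ ^ 2 / (2 * (ρ + 1)) * min (1 / (Lg + 1)) (1 / (ρ + 2)))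
    (hαlb : 2 * ε * (ρ + 1) / (μ ^ 2 - 2 * ε * (ρ + 1)) ≤ α) :
    2 * (ρ + 1) * (ε * (α + 1) / α) ≤ μ ^ 2 := by
  have hmin : min (1 / (Lg + 1)) (1 / (ρ + 2)) ≤ 1 :=
    (min_le_right _ _).trans ((div_le_one (by linarith)).2 (by linarith))
  have hε : 2 * ε * (ρ + 1) < μ ^ 2 := by
    have := hεlt.trans_le (mul_le_of_le_one_right (by positivity) hmin)
    rw [lt_div_iff₀ (by positivity)] at this
    linarith
  rw [div_le_iff₀ (by linarith)] at hαlb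
  rw [mul_div_assoc', div_le_iff₀ hα]
  linarith

theorem stmt_13_general {X : Type*} [NormedAddCommGroup X] [InnerProductSpace ℝ X] [CompleteSpace X]
    (f : X → EReal) (g : X → ℝ) (g' : X → X) (ρ Lg : ℝ)
    (hf_proper : (∃ x, f x ≠ ⊤) ∧ ∀ x, f x ≠ ⊥)
    (hf_wc : ∀ x y : X, ∀ l : ℝ, 0 ≤ l → l ≤ 1 →
      f (l • x + (1 - l) • y) ≤ ((l : ℝ) : EReal) * f x + ((1 - l : ℝ) : EReal) * f y +
        ((l * (1 - l) * (ρ / 2) * ‖x - y‖ ^ 2 : ℝ) : EReal))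
    (hg_conv : ConvexOn ℝ Set.univ g)
    (hg_diff : ∀ x, HasGradientAt g (g' x) x)
    (hg_lip : ∀ x y, ‖g' x - g' y‖ ≤ Lg * ‖x - y‖)
    (S : Set X)
    (hS : S = {x : X | ∀ y : X, f x + ((g x : ℝ) : EReal) ≤ f y + ((g y : ℝ) : EReal)})
    (hSne : S.Nonempty)
    (μ : ℝ) (hμ : 0 < μ)
    (hsharp : ∀ x : X,
      sInf (Set.range fun y : X => f y + ((g y : ℝ) : EReal)) +
          ((μ * Metric.infDist x S : ℝ) : EReal) ≤ f x + ((g x : ℝ) : EReal))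
    (α ε : ℝ) (hα : 0 < α) (hε0 : 0 ≤ ε)
    (hεlt : ε < μ ^ 2 / (2 * (ρ + 1)) * min (1 / (Lg + 1)) (1 / (ρ + 2)))
    (hαlb : 2 * ε * (ρ + 1) / (μ ^ 2 - 2 * ε * (ρ + 1)) ≤ α)
    (hαub : α < min (1 / Lg) (1 / (ρ + 1)))
    (Em Ep : ℝ)
    (hEm : Em = (μ - Real.sqrt (μ ^ 2 - 2 * ε * (ρ + 1) * (α + 1) / α)) / (ρ + 1))
    (hEp : Ep = (μ + Real.sqrt (μ ^ 2 - 2 * ε * (ρ + 1) * (α + 1) / α)) / (ρ + 1))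
    (x : ℕ → X)
    (hseq : ∀ t : ℕ, ∀ z : X,
      f (x (t + 1)) +
          ((1 / (2 * α) * ‖x (t + 1) - (x t - α • g' (x t))‖ ^ 2 : ℝ) : EReal) ≤
        f z + ((1 / (2 * α) * ‖z - (x t - α • g' (x t))‖ ^ 2 + ε : ℝ) : EReal))
    (t₀ : ℕ)
    (hband : ∀ t ≥ t₀, Em < Metric.infDist (x t) S ∧ Metric.infDist (x t) S < Ep) :
    Summable (fun t : ℕ => ‖x t - x (t + 1)‖) ∧
    CauchySeq x ∧
    ∃ p : X, Filter.Tendsto x Filter.atTop (nhds p) := by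
  have hαL := (pos_and_mul_lt_one_of_lt_one_div hα (hαub.trans_le (min_le_left _ _))).2
  obtain ⟨hρ, hαρ⟩ := pos_and_mul_lt_one_of_lt_one_div hα (hαub.trans_le (min_le_right _ _))
  have hSmin : ∀ s ∈ S, ∀ y, f s + ((g s : ℝ) : EReal) ≤ f y + ((g y : ℝ) : EReal) := by
    rw [hS]; exact fun s hs => hs
  have hdisc := two_mul_mul_le_sq_of_params hρ hα hεlt hαlb
  rw [show 2 * ε * (ρ + 1) * (α + 1) / α = 2 * (ρ + 1) * (ε * (α + 1) / α) by ring] at hEm hEp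
  have hEm0 : 0 ≤ Em := hEm ▸ sub_sqrt_div_nonneg hρ hμ.le (mul_nonneg hρ.le (by positivity))
  have hstep (t : ℕ) := IsInexactProx.infDist_step_le hf_proper.2 hf_wc hg_conv hg_diff hg_lip
    hα hαρ hSmin hf_proper.1 hSne hsharp (hseq t)
  have herr : ε * (1 - α * ρ) / α ≤ ε * (α + 1) / α :=
    div_le_div_of_nonneg_right (mul_le_mul_of_nonneg_left (by linarith [mul_pos hα hρ]) hε0) hα.le
  have hsum : Summable fun n => ‖x (n + t₀) - x (n + t₀ + 1)‖ := by
    refine summable_of_sq_step_le_of_mem_band (d := fun n => infDist (x (n + t₀)) S)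
      (a := 1 / (2 * α)) (k := (ρ + 1) / 2) (by positivity) (one_div_two_mul_sub_half_pos hα hαL)
      (by positivity) hEm0 (fun n => hband _ (Nat.le_add_left _ _)) fun n => ?_
    have := quadratic_eq_mul_sub_mul_sub (r := infDist (x (n + t₀ + 1)) S) hρ.ne' hdisc
    rw [← hEm, ← hEp] at this
    rw [Nat.add_right_comm n 1 t₀]
    linarith [hstep (n + t₀), herr]
  have hsum' := (summable_nat_add_iff (f := fun t => ‖x t - x (t + 1)‖) t₀).1 hsum
  have hcauchy := cauchySeq_of_summable_dist (f := x) (by simpa only [dist_eq_norm] using hsum')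
  exact ⟨hsum', hcauchy, cauchySeq_tendsto_of_complete hcauchy⟩

/-- Corollary 6.1: under the standing assumptions, global sharpness of `f+g`
with constant `μ > 0`, and the parameter assumptions on `ε` and `α`, for an inexact
forward–backward sequence: if `E⁻ < dist(x_t,S) < E⁺` for all `t ≥ t₀`, then
`Σ_t ‖x_t − x_{t+1}‖ < ∞`, so `(x_t)` is a Cauchy sequence and converges strongly. -/
theorem stmt_13 {X : Type*} [NormedAddCommGroup X] [InnerProductSpace ℝ X] [CompleteSpace X]
    (f : X → EReal) (g : X → ℝ) (g' : X → X) (ρ Lg : ℝ) (hρ : 0 ≤ ρ)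
    (hf_proper : (∃ x, f x ≠ ⊤) ∧ ∀ x, f x ≠ ⊥)
    (hf_lsc : LowerSemicontinuous f)
    (hf_wc : ∀ x y : X, ∀ l : ℝ, 0 ≤ l → l ≤ 1 →
      f (l • x + (1 - l) • y) ≤ ((l : ℝ) : EReal) * f x + ((1 - l : ℝ) : EReal) * f y +
        ((l * (1 - l) * (ρ / 2) * ‖x - y‖ ^ 2 : ℝ) : EReal))
    (hf_bdd : ∃ m : ℝ, ∀ x, ((m : ℝ) : EReal) ≤ f x)
    (hg_conv : ConvexOn ℝ Set.univ g)
    (hg_diff : ∀ x, HasGradientAt g (g' x) x)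
    (hg_lip : ∀ x y, ‖g' x - g' y‖ ≤ Lg * ‖x - y‖)
    (S : Set X)
    (hS : S = {x : X | ∀ y : X, f x + ((g x : ℝ) : EReal) ≤ f y + ((g y : ℝ) : EReal)})
    (hSne : S.Nonempty)
    (μ : ℝ) (hμ : 0 < μ)
    (hsharp : ∀ x : X,
      sInf (Set.range fun y : X => f y + ((g y : ℝ) : EReal)) +
          ((μ * Metric.infDist x S : ℝ) : EReal) ≤ f x + ((g x : ℝ) : EReal))
    (α ε : ℝ) (hα : 0 < α) (hε0 : 0 ≤ ε)
    (hεlt : ε < μ ^ 2 / (2 * (ρ + 1)) * min (1 / (Lg + 1)) (1 / (ρ + 2)))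
    (hαlb : 2 * ε * (ρ + 1) / (μ ^ 2 - 2 * ε * (ρ + 1)) ≤ α)
    (hαub : α < min (1 / Lg) (1 / (ρ + 1)))
    (Em Ep : ℝ)
    (hEm : Em = (μ - Real.sqrt (μ ^ 2 - 2 * ε * (ρ + 1) * (α + 1) / α)) / (ρ + 1))
    (hEp : Ep = (μ + Real.sqrt (μ ^ 2 - 2 * ε * (ρ + 1) * (α + 1) / α)) / (ρ + 1))
    (x : ℕ → X)
    (hseq : ∀ t : ℕ, ∀ z : X,
      f (x (t + 1)) +
          ((1 / (2 * α) * ‖x (t + 1) - (x t - α • g' (x t))‖ ^ 2 : ℝ) : EReal) ≤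
        f z + ((1 / (2 * α) * ‖z - (x t - α • g' (x t))‖ ^ 2 + ε : ℝ) : EReal))
    (t₀ : ℕ)
    (hband : ∀ t ≥ t₀, Em < Metric.infDist (x t) S ∧ Metric.infDist (x t) S < Ep) :
    Summable (fun t : ℕ => ‖x t - x (t + 1)‖) ∧
    CauchySeq x ∧
    ∃ p : X, Filter.Tendsto x Filter.atTop (nhds p) :=
  stmt_13_general f g g' ρ Lg hf_proper hf_wc hg_conv hg_diff hg_lip S hS hSne μ hμ hsharp α ε hα
    hε0 hεlt hαlb hαub Em Ep hEm hEp x hseq t₀ hband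
end

section
/- Assume the standing assumptions on f and g with ρ > 0, and that f+g satisfies the global sharpness condition with constant μ > 0. Let (x_t) be an exact forward–backward sequence with constant step size α satisfying 0 < α < min{1/L_g, 1/ρ}. Then: (a) for every t, either dist(x_{t+1},S) = 0 or (1 − αρ + 2αμ/dist(x_{t+1},S))·dist²(x_{t+1},S) ≤ dist²(x_t,S); and (b) if dist(x_{t₀},S) < 2μ/ρ for some t₀ ∈ ℕ, then dist(x_t,S) < 2μ/ρ for all t ≥ t₀, and the factor 1 − αρ + 2αμ/dist(x_{t+1},S) is > 1 whenever t ≥ t₀ and dist(x_{t+1},S) > 0. -/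
open Metric Filter
open scoped RealInnerProductSpace Topology

/-! Fix a minimizer `s` and write `y = x - α ∇g(x)`, `x⁺` for the prox point of `f` at `y`.
Since `f + ‖· - y‖² / (2α)` is `(1/α - ρ)`-strongly convex, minimality of `x⁺` along the segment
to `s` gives the three-point inequality
`f x⁺ + ‖x⁺ - y‖² / (2α) + (1/(2α) - ρ/2) ‖s - x⁺‖² ≤ f s + ‖s - y‖² / (2α)`.
The gradient inequality for the convex `g` at `s` and the descent lemma at `x⁺` (using `α L_g ≤ 1`)
turn it into `F x⁺ + (1/(2α) - ρ/2) ‖s - x⁺‖² ≤ F s + ‖s - x‖² / (2α)` for `F = f + g`.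
Sharpness bounds `F x⁺ - F s` below by `μ d(x⁺)`, and minimizing over `s` yields
`2αμ d(x⁺) + (1 - αρ) d(x⁺)² ≤ d(x)²`, which is (a). If `d(x⁺) ≥ 2μ/ρ`, the left side is at least
`(2μ/ρ)²`, so the ball `d < 2μ/ρ` is invariant, and there `αρ < 2αμ / d(x⁺)`, which is (b). -/

theorem norm_smul_add_one_sub_smul_sq {X : Type*} [NormedAddCommGroup X] [InnerProductSpace ℝ X]
    (u v : X) (l : ℝ) :
    ‖l • u + (1 - l) • v‖ ^ 2 = l * ‖u‖ ^ 2 + (1 - l) * ‖v‖ ^ 2 - l * (1 - l) * ‖u - v‖ ^ 2 := by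
  rw [norm_add_sq_real, norm_sub_sq_real, norm_smul, norm_smul, real_inner_smul_left,
    real_inner_smul_right, mul_pow, mul_pow, Real.norm_eq_abs, Real.norm_eq_abs, sq_abs, sq_abs]
  ring

theorem norm_sub_sub_smul_sq {X : Type*} [NormedAddCommGroup X] [InnerProductSpace ℝ X]
    (u x G : X) (α : ℝ) :
    ‖u - (x - α • G)‖ ^ 2 = ‖u - x‖ ^ 2 + 2 * α * ⟪G, u - x⟫ + α ^ 2 * ‖G‖ ^ 2 := by
  rw [show u - (x - α • G) = (u - x) + α • G by abel, norm_add_sq_real, norm_smul,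
    real_inner_smul_right, real_inner_comm, mul_pow, Real.norm_eq_abs, sq_abs]
  ring

theorem add_le_of_forall_one_sub_mul_le {A K B : ℝ}
    (h : ∀ l : ℝ, 0 < l → l ≤ 1 → A + (1 - l) * K ≤ B) : A + K ≤ B := by
  have hlim : Tendsto (fun l : ℝ => A + (1 - l) * K) (𝓝[>] 0) (𝓝 (A + (1 - 0) * K)) :=
    (Continuous.tendsto (by fun_prop) 0).mono_left nhdsWithin_le_nhds
  refine (le_of_tendsto hlim ?_).trans_eq' (by ring)
  filter_upwards [Ioc_mem_nhdsGT one_pos] with l hl using h l hl.1 hl.2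

theorem mul_le_one_of_lt_one_div {α L : ℝ} (hα : 0 < α) (h : α < 1 / L) : α * L ≤ 1 := by
  rcases le_or_gt L 0 with hL | hL
  · nlinarith
  · exact ((lt_div_iff₀ hL).1 h).le

theorem EReal.exists_eq_coe_of_add_coe_le {a b : EReal} {r r' : ℝ} (h : a + r ≤ b + r')
    (ha : a ≠ ⊥) (hb : b ≠ ⊤) : ∃ a' : ℝ, a = a' := by
  refine ⟨a.toReal, (EReal.coe_toReal (fun ha_top => ?_) ha).symm⟩
  rw [ha_top, EReal.top_add_coe, top_le_iff] at h
  exact EReal.add_lt_top hb (EReal.coe_ne_top r') |>.ne h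

theorem le_sq_infDist {X : Type*} [PseudoMetricSpace X] {S : Set X} {x : X} {r : ℝ}
    (hS : S.Nonempty) (h : ∀ s ∈ S, r ≤ dist x s ^ 2) : r ≤ infDist x S ^ 2 := by
  rcases le_or_gt r 0 with hr | hr
  · exact hr.trans (sq_nonneg _)
  · refine (Real.sqrt_le_left infDist_nonneg).1 ((le_infDist hS).2 fun s hs => ?_)
    exact (Real.sqrt_le_left dist_nonneg).2 (h s hs)

section Gradient

variable {X : Type*} [NormedAddCommGroup X] [InnerProductSpace ℝ X] [CompleteSpace X]
  {g : X → ℝ} {g' : X → X}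

theorem HasGradientAt.hasDerivAt_comp_lineMap {x y : X} {t : ℝ} {G : X}
    (h : HasGradientAt g G (AffineMap.lineMap x y t)) :
    HasDerivAt (g ∘ AffineMap.lineMap x y) ⟪G, y - x⟫ t := by
  simpa [InnerProductSpace.toDual_apply_apply] using
    h.hasFDerivAt.comp_hasDerivAt t AffineMap.hasDerivAt_lineMap

theorem ConvexOn.add_inner_sub_le_of_hasGradientAt (hg : ConvexOn ℝ Set.univ g) {x : X} {G : X}
    (h : HasGradientAt g G x) (y : X) : g x + ⟪G, y - x⟫ ≤ g y := by
  have hline : ConvexOn ℝ Set.univ (g ∘ AffineMap.lineMap x y) :=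
    hg.comp_affineMap (AffineMap.lineMap x y)
  have := hline.le_slope_of_hasDerivAt (Set.mem_univ 0) (Set.mem_univ 1) zero_lt_one
    (HasGradientAt.hasDerivAt_comp_lineMap (by simpa using h))
  rw [slope_def_field] at this
  simp only [Function.comp_apply, AffineMap.lineMap_apply_one, AffineMap.lineMap_apply_zero,
    sub_zero, div_one] at this
  linarith

theorem le_add_inner_add_sq_of_lipschitz_gradient {L : ℝ}
    (hg : ∀ x, HasGradientAt g (g' x) x) (hL : ∀ x y, ‖g' x - g' y‖ ≤ L * ‖x - y‖) (x y : X) :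
    g y ≤ g x + ⟪g' x, y - x⟫ + L / 2 * ‖y - x‖ ^ 2 := by
  set ℓ := AffineMap.lineMap (k := ℝ) x y
  have hφ : ∀ t, HasDerivAt (fun t => (g ∘ ℓ) t - t * ⟪g' x, y - x⟫)
      (⟪g' (ℓ t), y - x⟫ - ⟪g' x, y - x⟫) t := fun t =>
    (hg _).hasDerivAt_comp_lineMap.sub (by simpa using (hasDerivAt_id t).mul_const _)
  have hB : ∀ t, HasDerivAt (fun t => g x + L / 2 * t ^ 2 * ‖y - x‖ ^ 2)
      (L / 2 * (2 * t) * ‖y - x‖ ^ 2) t := fun t => by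
    have hsq : HasDerivAt (· ^ 2) (2 * t) t := by simpa using hasDerivAt_pow 2 t
    exact ((hsq.const_mul (L / 2)).mul_const (‖y - x‖ ^ 2)).const_add (g x)
  have hslope : ∀ t ∈ Set.Ico (0 : ℝ) 1,
      ⟪g' (ℓ t), y - x⟫ - ⟪g' x, y - x⟫ ≤ L / 2 * (2 * t) * ‖y - x‖ ^ 2 := fun t ht =>
    calc ⟪g' (ℓ t), y - x⟫ - ⟪g' x, y - x⟫ = ⟪g' (ℓ t) - g' x, y - x⟫ := (inner_sub_left ..).symm
      _ ≤ ‖g' (ℓ t) - g' x‖ * ‖y - x‖ := real_inner_le_norm _ _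
      _ ≤ L * ‖ℓ t - x‖ * ‖y - x‖ := by gcongr; exact hL _ _
      _ = L / 2 * (2 * t) * ‖y - x‖ ^ 2 := by
        rw [← vsub_eq_sub, AffineMap.lineMap_vsub_left, vsub_eq_sub, norm_smul,
          Real.norm_of_nonneg ht.1]
        ring
  have := image_le_of_deriv_right_le_deriv_boundary
    (fun t _ => (hφ t).continuousAt.continuousWithinAt) (fun t _ => (hφ t).hasDerivWithinAt)
    (by simp [ℓ]) (fun t _ => (hB t).continuousAt.continuousWithinAt)
    (fun t _ => (hB t).hasDerivWithinAt) hslope (Set.right_mem_Icc.2 zero_le_one)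
  simp only [Function.comp_apply, AffineMap.lineMap_apply_one, one_mul, one_pow, mul_one,
    tsub_le_iff_right, ℓ] at this
  linarith

end Gradient

section ForwardBackward

variable {X : Type*} [NormedAddCommGroup X] [InnerProductSpace ℝ X]

/-- Chord form of the convexity of `f + (ρ/2) ‖·‖²`; the two agree by
`norm_smul_add_one_sub_smul_sq`. -/
def WeaklyConvex (ρ : ℝ) (f : X → EReal) : Prop :=
  ∀ x y : X, ∀ l : ℝ, 0 ≤ l → l ≤ 1 →
    f (l • x + (1 - l) • y) ≤ ((l : ℝ) : EReal) * f x + ((1 - l : ℝ) : EReal) * f y +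
      ((l * (1 - l) * (ρ / 2) * ‖x - y‖ ^ 2 : ℝ) : EReal)

def IsProxPoint (f : X → EReal) (α : ℝ) (y p : X) : Prop :=
  ∀ z : X, f p + ((1 / (2 * α) * ‖p - y‖ ^ 2 : ℝ) : EReal) ≤
    f z + ((1 / (2 * α) * ‖z - y‖ ^ 2 : ℝ) : EReal)

theorem WeaklyConvex.prox_three_point {f : X → EReal} {ρ α a b : ℝ} {y p s : X}
    (hf : WeaklyConvex ρ f) (hp : IsProxPoint f α y p) (ha : f p = a) (hb : f s = b) :
    a + 1 / (2 * α) * ‖p - y‖ ^ 2 + (1 / (2 * α) - ρ / 2) * ‖s - p‖ ^ 2 ≤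
      b + 1 / (2 * α) * ‖s - y‖ ^ 2 := by
  refine add_le_of_forall_one_sub_mul_le fun l hl0 hl1 => ?_
  set z := l • s + (1 - l) • p
  have hz : f z + ((1 / (2 * α) * ‖z - y‖ ^ 2 : ℝ) : EReal) ≤
      ((l * b + (1 - l) * a + l * (1 - l) * (ρ / 2) * ‖s - p‖ ^ 2
        + 1 / (2 * α) * ‖z - y‖ ^ 2 : ℝ) : EReal) := by
    have := hf s p l hl0.le hl1
    rw [ha, hb] at this
    exact_mod_cast add_le_add_left this _
  have hreal : a + 1 / (2 * α) * ‖p - y‖ ^ 2 ≤ l * b + (1 - l) * a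
      + l * (1 - l) * (ρ / 2) * ‖s - p‖ ^ 2 + 1 / (2 * α) * ‖z - y‖ ^ 2 := by
    have := (hp z).trans hz
    rw [ha] at this
    exact_mod_cast this
  have hzy : ‖z - y‖ ^ 2 = l * ‖s - y‖ ^ 2 + (1 - l) * ‖p - y‖ ^ 2 - l * (1 - l) * ‖s - p‖ ^ 2 := by
    rw [show z - y = l • (s - y) + (1 - l) • (p - y) by module, norm_smul_add_one_sub_smul_sq,
      sub_sub_sub_cancel_right]
  rw [hzy] at hreal
  refine le_of_mul_le_mul_left ?_ hl0
  linarith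

variable [CompleteSpace X] {f : X → EReal} {g : X → ℝ} {g' : X → X} {ρ L α μ : ℝ}

theorem forwardBackward_three_point (hg_conv : ConvexOn ℝ Set.univ g)
    (hg_diff : ∀ x, HasGradientAt g (g' x) x) (hg_lip : ∀ x y, ‖g' x - g' y‖ ≤ L * ‖x - y‖)
    (hα : 0 < α) (hαL : α * L ≤ 1) {a b K : ℝ} {x p s : X}
    (h : a + 1 / (2 * α) * ‖p - (x - α • g' x)‖ ^ 2 + K ≤
      b + 1 / (2 * α) * ‖s - (x - α • g' x)‖ ^ 2) :
    a + g p + K ≤ b + g s + 1 / (2 * α) * ‖s - x‖ ^ 2 := by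
  have hexpand : ∀ u, 1 / (2 * α) * ‖u - (x - α • g' x)‖ ^ 2 =
      1 / (2 * α) * ‖u - x‖ ^ 2 + ⟪g' x, u - x⟫ + α / 2 * ‖g' x‖ ^ 2 := fun u => by
    rw [norm_sub_sub_smul_sq]
    field_simp
  have hconv := hg_conv.add_inner_sub_le_of_hasGradientAt (hg_diff x) s
  have hdesc := le_add_inner_add_sq_of_lipschitz_gradient hg_diff hg_lip x p
  have hcoef : L / 2 ≤ 1 / (2 * α) := by
    rw [div_le_div_iff₀ two_pos (by positivity)]
    linarith
  rw [hexpand, hexpand] at h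
  linarith [mul_le_mul_of_nonneg_right hcoef (sq_nonneg ‖p - x‖)]

theorem sq_infDist_forwardBackward_step {S : Set X} {x₀ x p : X} (hf : WeaklyConvex ρ f)
    (hf_ne_bot : ∀ x, f x ≠ ⊥) (hx₀ : f x₀ ≠ ⊤) (hg_conv : ConvexOn ℝ Set.univ g)
    (hg_diff : ∀ x, HasGradientAt g (g' x) x) (hg_lip : ∀ x y, ‖g' x - g' y‖ ≤ L * ‖x - y‖)
    (hS : S = {x : X | ∀ y : X, f x + ((g x : ℝ) : EReal) ≤ f y + ((g y : ℝ) : EReal)})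
    (hSne : S.Nonempty)
    (hsharp : ∀ x : X,
      sInf (Set.range fun y : X => f y + ((g y : ℝ) : EReal)) +
          ((μ * infDist x S : ℝ) : EReal) ≤ f x + ((g x : ℝ) : EReal))
    (hα : 0 < α) (hαρ : α * ρ ≤ 1) (hαL : α * L ≤ 1) (hp : IsProxPoint f α (x - α • g' x) p) :
    2 * α * μ * infDist p S + (1 - α * ρ) * infDist p S ^ 2 ≤ infDist x S ^ 2 := by
  obtain ⟨a, ha⟩ := EReal.exists_eq_coe_of_add_coe_le (hp x₀) (hf_ne_bot p) hx₀
  refine le_sq_infDist hSne fun s hs => ?_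
  have hs_min : ∀ y, f s + ((g s : ℝ) : EReal) ≤ f y + ((g y : ℝ) : EReal) := by
    rwa [hS] at hs
  obtain ⟨b, hb⟩ := EReal.exists_eq_coe_of_add_coe_le (hs_min x₀) (hf_ne_bot s) hx₀
  have hdescent := forwardBackward_three_point hg_conv hg_diff hg_lip hα hαL
    (hf.prox_three_point hp ha hb)
  have hsharp_p : b + g s + μ * infDist p S ≤ a + g p := by
    have hmin : f s + ((g s : ℝ) : EReal) ≤
        sInf (Set.range fun y : X => f y + ((g y : ℝ) : EReal)) :=
      le_sInf <| Set.forall_mem_range.2 hs_min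
    have := (add_le_add_left hmin _).trans (hsharp p)
    rw [ha, hb] at this
    exact_mod_cast this
  have hdist : infDist p S ^ 2 ≤ ‖s - p‖ ^ 2 := by
    have := infDist_le_dist_of_mem (x := p) hs
    rw [dist_comm, dist_eq_norm] at this
    exact pow_le_pow_left₀ infDist_nonneg this 2
  have hcoef : 0 ≤ 1 / (2 * α) - ρ / 2 := by
    rw [sub_nonneg, div_le_div_iff₀ two_pos (by positivity)]
    linarith
  have hbound : μ * infDist p S + (1 / (2 * α) - ρ / 2) * infDist p S ^ 2 ≤
      1 / (2 * α) * ‖s - x‖ ^ 2 := by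
    linarith [mul_le_mul_of_nonneg_left hdist hcoef]
  calc 2 * α * μ * infDist p S + (1 - α * ρ) * infDist p S ^ 2
      = 2 * α * (μ * infDist p S + (1 / (2 * α) - ρ / 2) * infDist p S ^ 2) := by
        field_simp
    _ ≤ 2 * α * (1 / (2 * α) * ‖s - x‖ ^ 2) := by gcongr
    _ = dist x s ^ 2 := by
        rw [dist_comm, dist_eq_norm]
        field_simp

end ForwardBackward

theorem lt_two_mul_div_of_recursion {α ρ μ q r : ℝ} (hρ : 0 < ρ) (hαρ : α * ρ ≤ 1) (hr : 0 ≤ r)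
    (hq : 0 ≤ q) (hstep : 2 * α * μ * r + (1 - α * ρ) * r ^ 2 ≤ q ^ 2) (hqB : q < 2 * μ / ρ) :
    r < 2 * μ / ρ := by
  by_contra! hrB
  set B := 2 * μ / ρ
  have hB : 0 < B := hq.trans_lt hqB
  have h2αμ : 2 * α * μ = α * ρ * B := by
    simp only [B]
    field_simp
  have hfactor : 0 ≤ (r - B) * ((1 - α * ρ) * r + B) :=
    mul_nonneg (sub_nonneg.2 hrB) (by nlinarith)
  nlinarith [mul_self_lt_mul_self hq hqB]

theorem one_lt_one_sub_add_div {α ρ μ r : ℝ} (hα : 0 < α) (hρ : 0 < ρ) (hr : 0 < r)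
    (hrB : r < 2 * μ / ρ) : 1 < 1 - α * ρ + 2 * α * μ / r := by
  have hρr : ρ * r < 2 * μ := (lt_div_iff₀' hρ).1 hrB
  have : α * ρ < 2 * α * μ / r := by
    rw [lt_div_iff₀ hr]
    nlinarith
  linarith

theorem stmt_14_general {X : Type*} [NormedAddCommGroup X] [InnerProductSpace ℝ X] [CompleteSpace X]
    (f : X → EReal) (g : X → ℝ) (g' : X → X) (ρ Lg : ℝ) (hρ : 0 < ρ)
    (hf_proper : (∃ x, f x ≠ ⊤) ∧ ∀ x, f x ≠ ⊥)
    (hf_wc : ∀ x y : X, ∀ l : ℝ, 0 ≤ l → l ≤ 1 →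
      f (l • x + (1 - l) • y) ≤ ((l : ℝ) : EReal) * f x + ((1 - l : ℝ) : EReal) * f y +
        ((l * (1 - l) * (ρ / 2) * ‖x - y‖ ^ 2 : ℝ) : EReal))
    (hg_conv : ConvexOn ℝ Set.univ g)
    (hg_diff : ∀ x, HasGradientAt g (g' x) x)
    (hg_lip : ∀ x y, ‖g' x - g' y‖ ≤ Lg * ‖x - y‖)
    (S : Set X)
    (hS : S = {x : X | ∀ y : X, f x + ((g x : ℝ) : EReal) ≤ f y + ((g y : ℝ) : EReal)})
    (hSne : S.Nonempty)
    (μ : ℝ)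
    (hsharp : ∀ x : X,
      sInf (Set.range fun y : X => f y + ((g y : ℝ) : EReal)) +
          ((μ * Metric.infDist x S : ℝ) : EReal) ≤ f x + ((g x : ℝ) : EReal))
    (α : ℝ) (hα : 0 < α) (hαub : α < min (1 / Lg) (1 / ρ))
    (x : ℕ → X)
    (hseq : ∀ t : ℕ, ∀ z : X,
      f (x (t + 1)) +
          ((1 / (2 * α) * ‖x (t + 1) - (x t - α • g' (x t))‖ ^ 2 : ℝ) : EReal) ≤
        f z + ((1 / (2 * α) * ‖z - (x t - α • g' (x t))‖ ^ 2 : ℝ) : EReal)) :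
    (∀ t : ℕ,
      Metric.infDist (x (t + 1)) S = 0 ∨
      (1 - α * ρ + 2 * α * μ / Metric.infDist (x (t + 1)) S) *
          (Metric.infDist (x (t + 1)) S) ^ 2 ≤ (Metric.infDist (x t) S) ^ 2) ∧
    (∀ t₀ : ℕ, Metric.infDist (x t₀) S < 2 * μ / ρ →
      ∀ t ≥ t₀,
        Metric.infDist (x t) S < 2 * μ / ρ ∧
        (0 < Metric.infDist (x (t + 1)) S →
          1 < 1 - α * ρ + 2 * α * μ / Metric.infDist (x (t + 1)) S)) := by
  obtain ⟨⟨x₀, hx₀⟩, hf_ne_bot⟩ := hf_proper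
  have hαρ : α * ρ < 1 := (lt_div_iff₀ hρ).1 (hαub.trans_le (min_le_right _ _))
  have hαL : α * Lg ≤ 1 := mul_le_one_of_lt_one_div hα (hαub.trans_le (min_le_left _ _))
  have hstep : ∀ t, 2 * α * μ * infDist (x (t + 1)) S + (1 - α * ρ) * infDist (x (t + 1)) S ^ 2
      ≤ infDist (x t) S ^ 2 := fun t =>
    sq_infDist_forwardBackward_step hf_wc hf_ne_bot hx₀ hg_conv hg_diff hg_lip hS hSne hsharp hα
      hαρ.le hαL (hseq t)
  have hinv : ∀ t₀, infDist (x t₀) S < 2 * μ / ρ → ∀ t ≥ t₀, infDist (x t) S < 2 * μ / ρ := by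
    intro t₀ h₀ t ht
    induction t, ht using Nat.le_induction with
    | base => exact h₀
    | succ t _ ih =>
      exact lt_two_mul_div_of_recursion hρ hαρ.le infDist_nonneg infDist_nonneg (hstep t) ih
  refine ⟨fun t => ?_, fun t₀ h₀ t ht => ⟨hinv t₀ h₀ t ht, fun hpos => ?_⟩⟩
  · refine or_iff_not_imp_left.2 fun hne => ?_
    calc (1 - α * ρ + 2 * α * μ / infDist (x (t + 1)) S) * infDist (x (t + 1)) S ^ 2
        = 2 * α * μ * infDist (x (t + 1)) S + (1 - α * ρ) * infDist (x (t + 1)) S ^ 2 := by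
          field_simp
          ring
      _ ≤ _ := hstep t
  · exact one_lt_one_sub_add_div hα hρ hpos (hinv t₀ h₀ (t + 1) (Nat.le_succ_of_le ht))

/-- Lemma 7.1: under the standing assumptions with `ρ > 0` and global sharpness
of `f+g` with constant `μ > 0`, for an exact forward–backward sequence with constant step size
`0 < α < min{1/L_g, 1/ρ}`: (a) for every `t`, either `dist(x_{t+1},S) = 0` or
`(1 − αρ + 2αμ/dist(x_{t+1},S))·dist²(x_{t+1},S) ≤ dist²(x_t,S)`; (b) if
`dist(x_{t₀},S) < 2μ/ρ` then `dist(x_t,S) < 2μ/ρ` for all `t ≥ t₀`, and the contraction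
factor is `> 1` whenever `t ≥ t₀` and `dist(x_{t+1},S) > 0`. -/
theorem stmt_14 {X : Type*} [NormedAddCommGroup X] [InnerProductSpace ℝ X] [CompleteSpace X]
    (f : X → EReal) (g : X → ℝ) (g' : X → X) (ρ Lg : ℝ) (hρ : 0 < ρ)
    (hf_proper : (∃ x, f x ≠ ⊤) ∧ ∀ x, f x ≠ ⊥)
    (hf_lsc : LowerSemicontinuous f)
    (hf_wc : ∀ x y : X, ∀ l : ℝ, 0 ≤ l → l ≤ 1 →
      f (l • x + (1 - l) • y) ≤ ((l : ℝ) : EReal) * f x + ((1 - l : ℝ) : EReal) * f y +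
        ((l * (1 - l) * (ρ / 2) * ‖x - y‖ ^ 2 : ℝ) : EReal))
    (hf_bdd : ∃ m : ℝ, ∀ x, ((m : ℝ) : EReal) ≤ f x)
    (hg_conv : ConvexOn ℝ Set.univ g)
    (hg_diff : ∀ x, HasGradientAt g (g' x) x)
    (hg_lip : ∀ x y, ‖g' x - g' y‖ ≤ Lg * ‖x - y‖)
    (S : Set X)
    (hS : S = {x : X | ∀ y : X, f x + ((g x : ℝ) : EReal) ≤ f y + ((g y : ℝ) : EReal)})
    (hSne : S.Nonempty)
    (μ : ℝ) (hμ : 0 < μ)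
    (hsharp : ∀ x : X,
      sInf (Set.range fun y : X => f y + ((g y : ℝ) : EReal)) +
          ((μ * Metric.infDist x S : ℝ) : EReal) ≤ f x + ((g x : ℝ) : EReal))
    (α : ℝ) (hα : 0 < α) (hαub : α < min (1 / Lg) (1 / ρ))
    (x : ℕ → X)
    (hseq : ∀ t : ℕ, ∀ z : X,
      f (x (t + 1)) +
          ((1 / (2 * α) * ‖x (t + 1) - (x t - α • g' (x t))‖ ^ 2 : ℝ) : EReal) ≤
        f z + ((1 / (2 * α) * ‖z - (x t - α • g' (x t))‖ ^ 2 : ℝ) : EReal)) :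
    (∀ t : ℕ,
      Metric.infDist (x (t + 1)) S = 0 ∨
      (1 - α * ρ + 2 * α * μ / Metric.infDist (x (t + 1)) S) *
          (Metric.infDist (x (t + 1)) S) ^ 2 ≤ (Metric.infDist (x t) S) ^ 2) ∧
    (∀ t₀ : ℕ, Metric.infDist (x t₀) S < 2 * μ / ρ →
      ∀ t ≥ t₀,
        Metric.infDist (x t) S < 2 * μ / ρ ∧
        (0 < Metric.infDist (x (t + 1)) S →
          1 < 1 - α * ρ + 2 * α * μ / Metric.infDist (x (t + 1)) S)) :=
  stmt_14_general f g g' ρ Lg hρ hf_proper hf_wc hg_conv hg_diff hg_lip S hS hSne μ hsharp α hα hαub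
    x hseq
end
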